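/- Let 𝒳 = {x_1,…,x_m} be a multiset of non-negative reals and let X_1,…,X_n (n ≤ m) be obtained by sampling n elements uniformly at random without replacement from 𝒳. Then X_1,…,X_n are negatively associated. -/

import Mathlib

/-!
A uniform sample without replacement `x ∘ π`, `π : α ↪ β`, has the law of `x ∘ σ ∘ a` for a fixed
`a : α ↪ β` and a uniform permutation `σ` of `β`, because `Perm β` acts transitively on `α ↪ β`;
so it suffices to show that `x ∘ σ` is negatively associated for a uniform bijection `σ : α ≃ β`.
This goes by induction on `card α`. Let `x j` be maximal and split the bijections according to the
coordinate `k = σ⁻¹ j`. On each class `x ∘ σ` is a uniform bijection between the complements of `k`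
and `j`, extended by the constant `x j` at `k`, so the covariances within the classes are
nonpositive by induction. The class sums `A k` of `f` are smallest off `S`, and those `B k` of `g`
smallest off `T`; as `S` and `T` are disjoint, `A` and `B` antivary, and Chebyshev's sum inequality
bounds the covariance between the classes.
-/

/-- `f` depends only on the coordinates indexed by `S`. -/
def DependsOnCoords {n : ℕ} (f : (Fin n → ℝ) → ℝ) (S : Finset (Fin n)) : Prop :=
  ∀ x y : Fin n → ℝ, (∀ i ∈ S, x i = y i) → f x = f y

open Finset

/-- The coordinates of `X ω`, for `ω` uniform on `Ω`, are negatively associated with respect to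
increasing test functions; the expectations are multiplied out by `card Ω`. -/
def UniformNegAssoc {Ω ι : Type*} [Fintype Ω] (X : Ω → ι → ℝ) : Prop :=
  ∀ ⦃f g : (ι → ℝ) → ℝ⦄ ⦃s t : Set ι⦄, Disjoint s t → DependsOn f s → DependsOn g t →
    Monotone f → Monotone g →
    Fintype.card Ω * ∑ ω, f (X ω) * g (X ω) ≤ (∑ ω, f (X ω)) * ∑ ω, g (X ω)

lemma Monotone.apply_le_apply_of_dependsOn {ι : Type*} {f : (ι → ℝ) → ℝ} {s : Set ι}
    (hf : Monotone f) (hfs : DependsOn f s) {u v : ι → ℝ} (huv : ∀ i ∈ s, u i ≤ v i) :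
    f u ≤ f v :=
  calc f u ≤ f (u ⊔ v) := hf le_sup_left
    _ = f v := hfs fun i hi => sup_eq_right.2 (huv i hi)

lemma antivary_of_forall_le_of_notMem {ι : Type*} {a b : ι → ℝ} {s t : Set ι}
    (hst : Disjoint s t) (ha : ∀ k ∉ s, ∀ l, a k ≤ a l) (hb : ∀ k ∉ t, ∀ l, b k ≤ b l) :
    Antivary a b := by
  intro i l hil
  have hl : l ∈ t := by
    by_contra hl
    exact (hb l hl i).not_gt hil
  exact ha l (hst.notMem_of_mem_right hl) i

theorem MulAction.card_smul_sum_smul_eq {G Ω M : Type*} [Group G] [MulAction G Ω] [Fintype G]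
    [Fintype Ω] [IsPretransitive G Ω] [AddCommMonoid M] (a : Ω) (F : Ω → M) :
    Fintype.card Ω • ∑ g : G, F (g • a) = Fintype.card G • ∑ ω, F ω := by
  have horbit : ∀ ω : Ω, ∑ g : G, F (g • ω) = ∑ g : G, F (g • a) := by
    intro ω
    obtain ⟨h, rfl⟩ := exists_smul_eq G a ω
    simpa [mul_smul] using Equiv.sum_comp (Equiv.mulRight h) fun g => F (g • a)
  calc Fintype.card Ω • ∑ g : G, F (g • a) = ∑ ω : Ω, ∑ g : G, F (g • ω) := by
        simp [horbit]
    _ = ∑ g : G, ∑ ω : Ω, F ω := by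
        rw [Finset.sum_comm]
        exact Fintype.sum_congr _ _ fun g => Equiv.sum_comp (MulAction.toPerm g) F
    _ = Fintype.card G • ∑ ω, F ω := by simp

section UniformNegAssoc

variable {Ω ι : Type*} [Fintype Ω]

lemma uniformNegAssoc_of_subsingleton [Subsingleton Ω] (X : Ω → ι → ℝ) : UniformNegAssoc X := by
  intro f g s t _ _ _ _ _
  rcases isEmpty_or_nonempty Ω with _ | ⟨⟨ω⟩⟩
  · simp
  · have : Unique Ω := uniqueOfSubsingleton ω
    simp

lemma UniformNegAssoc.comp_equiv {Ω' : Type*} [Fintype Ω'] {X : Ω → ι → ℝ}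
    (hX : UniformNegAssoc X) (e : Ω' ≃ Ω) : UniformNegAssoc (X ∘ e) := by
  intro f g s t hst hfs hgt hf hg
  simpa [Fintype.card_congr e, e.sum_comp fun ω => f (X ω) * g (X ω), e.sum_comp fun ω => f (X ω),
    e.sum_comp fun ω => g (X ω)] using hX hst hfs hgt hf hg

lemma UniformNegAssoc.comp_injective {κ : Type*} {X : Ω → κ → ℝ} (hX : UniformNegAssoc X)
    {a : ι → κ} (ha : Function.Injective a) : UniformNegAssoc fun ω => X ω ∘ a := by
  intro f g s t hst hfs hgt hf hg
  refine hX (f := fun u => f (u ∘ a)) (g := fun u => g (u ∘ a)) (s := a '' s) (t := a '' t)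
    ((Set.disjoint_image_iff ha).2 hst) ?_ ?_ (fun u v huv => hf fun i => huv (a i))
    (fun u v huv => hg fun i => huv (a i))
  · exact fun u v huv => hfs fun i hi => huv (a i) (Set.mem_image_of_mem a hi)
  · exact fun u v huv => hgt fun i hi => huv (a i) (Set.mem_image_of_mem a hi)

def extendAt [DecidableEq ι] (k : ι) (c : ℝ) (u : {i // i ≠ k} → ℝ) : ι → ℝ :=
  fun i => if h : i = k then c else u ⟨i, h⟩

lemma UniformNegAssoc.comp_extendAt [DecidableEq ι] {k : ι} {X : Ω → {i // i ≠ k} → ℝ}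
    (hX : UniformNegAssoc X) (c : ℝ) : UniformNegAssoc fun ω => extendAt k c (X ω) := by
  have hmono : Monotone (extendAt k c) := fun u v huv i => by
    unfold extendAt
    split_ifs
    exacts [le_rfl, huv _]
  have hdep {f : (ι → ℝ) → ℝ} {s : Set ι} (hfs : DependsOn f s) :
      DependsOn (f ∘ extendAt k c) (Subtype.val ⁻¹' s) := fun u v huv => hfs fun i hi => by
    unfold extendAt
    split_ifs
    exacts [rfl, huv _ hi]
  intro f g s t hst hfs hgt hf hg
  exact hX (hst.preimage _) (hdep hfs) (hdep hgt) (hf.comp hmono) (hg.comp hmono)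

lemma UniformNegAssoc.of_smul {G : Type*} [Group G] [MulAction G Ω] [Fintype G]
    [MulAction.IsPretransitive G Ω] {Y : Ω → ι → ℝ} (a : Ω)
    (hY : UniformNegAssoc fun g : G => Y (g • a)) : UniformNegAssoc Y := by
  intro f g s t hst hfs hgt hf hg
  have hsum (F : Ω → ℝ) :
      (Fintype.card Ω : ℝ) * ∑ γ : G, F (γ • a) = Fintype.card G * ∑ ω, F ω := by
    simpa using MulAction.card_smul_sum_smul_eq a F
  have hG : (0 : ℝ) < Fintype.card G := by exact_mod_cast Fintype.card_pos
  refine le_of_mul_le_mul_left ?_ (pow_pos hG 2)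
  calc (Fintype.card G : ℝ) ^ 2 * (Fintype.card Ω * ∑ ω, f (Y ω) * g (Y ω))
      = Fintype.card Ω ^ 2 * (Fintype.card G * ∑ γ : G, f (Y (γ • a)) * g (Y (γ • a))) := by
        linear_combination -(Fintype.card Ω * Fintype.card G : ℝ) * hsum fun ω => f (Y ω) * g (Y ω)
    _ ≤ Fintype.card Ω ^ 2 * ((∑ γ : G, f (Y (γ • a))) * ∑ γ : G, g (Y (γ • a))) :=
        mul_le_mul_of_nonneg_left (hY hst hfs hgt hf hg) (by positivity)
    _ = Fintype.card G ^ 2 * ((∑ ω, f (Y ω)) * ∑ ω, g (Y ω)) := by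
        linear_combination (Fintype.card Ω * ∑ γ : G, g (Y (γ • a))) * hsum (fun ω => f (Y ω))
          + (Fintype.card G * ∑ ω, f (Y ω)) * hsum (fun ω => g (Y ω))

lemma UniformNegAssoc.card_mul_sum_le_of_antitone {X : Ω → ι → ℝ}
    (hX : UniformNegAssoc fun ω => -X ω) {f g : (ι → ℝ) → ℝ} {s t : Set ι} (hst : Disjoint s t)
    (hfs : DependsOn f s) (hgt : DependsOn g t) (hf : Antitone f) (hg : Antitone g) :
    Fintype.card Ω * ∑ ω, f (X ω) * g (X ω) ≤ (∑ ω, f (X ω)) * ∑ ω, g (X ω) := by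
  have hdep {h : (ι → ℝ) → ℝ} {r : Set ι} (hr : DependsOn h r) : DependsOn (fun u => h (-u)) r :=
    fun u v huv => hr fun i hi => by simp [huv i hi]
  simpa using hX hst (hdep hfs) (hdep hgt) (fun u v huv => hf (neg_le_neg huv))
    (fun u v huv => hg (neg_le_neg huv))

end UniformNegAssoc

section Bijections

variable {α β : Type*} [DecidableEq α]

def swapFiber (k l : α) (j : β) : {σ : α ≃ β // σ k = j} ≃ {σ : α ≃ β // σ l = j} :=
  (Equiv.equivCongr (Equiv.swap k l) (Equiv.refl β)).subtypeEquiv fun σ => by simp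

lemma swapFiber_apply_coe {k l : α} {j : β} (σ : {σ : α ≃ β // σ k = j}) (i : α) :
    (swapFiber k l j σ).1 i = σ.1 (Equiv.swap k l i) := rfl

variable [DecidableEq β]

def restrictFiber (k : α) (j : β) : {σ : α ≃ β // σ k = j} ≃ ({i // i ≠ k} ≃ {b // b ≠ j}) :=
  ((Equiv.equivCongr (Equiv.optionSubtypeNe k).symm (Equiv.refl β)).subtypeEquiv
    fun σ => by simp).trans (Equiv.optionSubtype j)

lemma restrictFiber_apply_coe {k : α} {j : β} (σ : {σ : α ≃ β // σ k = j}) (i : {i // i ≠ k}) :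
    (restrictFiber k j σ i : β) = σ.1 i := by
  simp [restrictFiber]

lemma comp_eq_extendAt_restrictFiber (x : β → ℝ) {k : α} {j : β} (σ : {σ : α ≃ β // σ k = j}) :
    x ∘ σ.1 = extendAt k (x j) (x ∘ Subtype.val ∘ restrictFiber k j σ) := by
  ext i
  unfold extendAt
  split_ifs with h
  · simp [h, σ.2]
  · simp [restrictFiber_apply_coe]

variable [Fintype α] [Fintype β]

lemma Equiv.sum_eq_sum_sum_apply_eq {M : Type*} [AddCommMonoid M] (j : β) (F : (α ≃ β) → M) :
    ∑ σ, F σ = ∑ k, ∑ σ : {σ : α ≃ β // σ k = j}, F σ := by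
  rw [← Fintype.sum_fiberwise (fun σ : α ≃ β => σ.symm j)]
  exact Fintype.sum_congr _ _ fun k => Fintype.sum_equiv
    (Equiv.subtypeEquivRight fun σ => by rw [Equiv.symm_apply_eq, eq_comm]) _ _ fun σ => rfl

lemma card_mul_card_fiber (k : α) (j : β) :
    Fintype.card α * Fintype.card {σ : α ≃ β // σ k = j} = Fintype.card (α ≃ β) := by
  have h := Equiv.sum_eq_sum_sum_apply_eq j fun _ : α ≃ β => 1
  simp only [Finset.sum_const, Finset.card_univ, smul_eq_mul, mul_one] at h
  rw [h, Fintype.sum_congr _ _ fun l => Fintype.card_congr (swapFiber l k j)]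
  simp

lemma uniformNegAssoc_fiber {x : β → ℝ} {k : α} {j : β}
    (hX : UniformNegAssoc fun τ : {i // i ≠ k} ≃ {b // b ≠ j} => x ∘ Subtype.val ∘ τ) :
    UniformNegAssoc fun σ : {σ : α ≃ β // σ k = j} => x ∘ σ.1 := by
  convert (hX.comp_extendAt (x j)).comp_equiv (restrictFiber k j) using 1
  exact funext (comp_eq_extendAt_restrictFiber x)

lemma sum_fiber_le_sum_fiber {x : β → ℝ} {j : β} (hj : ∀ b, x b ≤ x j) {f : (α → ℝ) → ℝ}
    {s : Set α} (hf : Monotone f) (hfs : DependsOn f s) {k : α} (hk : k ∉ s) (l : α) :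
    ∑ σ : {σ : α ≃ β // σ k = j}, f (x ∘ σ.1) ≤ ∑ σ : {σ : α ≃ β // σ l = j}, f (x ∘ σ.1) := by
  rw [← Fintype.sum_equiv (swapFiber k l j) (fun σ => f (x ∘ (swapFiber k l j σ).1)) _
    fun _ => rfl]
  -- composing with `swap k l` moves the maximal value `x j` from the unread coordinate `k` to `l`
  refine Finset.sum_le_sum fun σ _ => hf.apply_le_apply_of_dependsOn hfs fun i hi => ?_
  have hik : i ≠ k := fun h => hk (h ▸ hi)
  simp only [Function.comp_apply, swapFiber_apply_coe]
  by_cases hil : i = l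
  · rw [hil, Equiv.swap_apply_right, σ.2]
    exact hj _
  · rw [Equiv.swap_apply_of_ne_of_ne hik hil]

theorem uniformNegAssoc_equiv (x : β → ℝ) : UniformNegAssoc fun σ : α ≃ β => x ∘ σ := by
  induction hn : Fintype.card α using Nat.strong_induction_on generalizing α β with
  | _ n ih =>
  rcases isEmpty_or_nonempty β with _ | _
  · exact uniformNegAssoc_of_subsingleton _
  obtain ⟨j, -, hj⟩ := exists_max_image univ x univ_nonempty
  have hfiber (k : α) : UniformNegAssoc fun σ : {σ : α ≃ β // σ k = j} => x ∘ σ.1 :=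
    uniformNegAssoc_fiber (ih _ (hn ▸ Fintype.card_subtype_lt (p := (· ≠ k)) (x := k) (by simp))
      (x ∘ Subtype.val) rfl)
  intro f g s t hst hfs hgt hf hg
  have hA := fun k hk => sum_fiber_le_sum_fiber (fun b => hj b (mem_univ b)) hf hfs (k := k) hk
  have hB := fun k hk => sum_fiber_le_sum_fiber (fun b => hj b (mem_univ b)) hg hgt (k := k) hk
  calc (Fintype.card (α ≃ β) : ℝ) * ∑ σ : α ≃ β, f (x ∘ σ) * g (x ∘ σ)
      = ∑ k, (Fintype.card α : ℝ) * (Fintype.card {σ : α ≃ β // σ k = j} *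
          ∑ σ : {σ : α ≃ β // σ k = j}, f (x ∘ σ.1) * g (x ∘ σ.1)) := by
        rw [Equiv.sum_eq_sum_sum_apply_eq j, mul_sum]
        refine Fintype.sum_congr _ _ fun k => ?_
        rw [← card_mul_card_fiber k j, Nat.cast_mul, mul_assoc]
    _ ≤ ∑ k, (Fintype.card α : ℝ) * ((∑ σ : {σ : α ≃ β // σ k = j}, f (x ∘ σ.1)) *
          ∑ σ : {σ : α ≃ β // σ k = j}, g (x ∘ σ.1)) :=
        sum_le_sum fun k _ => mul_le_mul_of_nonneg_left (hfiber k hst hfs hgt hf hg)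
          (by positivity)
    _ ≤ (∑ σ : α ≃ β, f (x ∘ σ)) * ∑ σ : α ≃ β, g (x ∘ σ) := by
        rw [← mul_sum, Equiv.sum_eq_sum_sum_apply_eq j, Equiv.sum_eq_sum_sum_apply_eq j]
        exact (antivary_of_forall_le_of_notMem hst hA hB).card_mul_sum_le_sum_mul_sum

end Bijections

theorem uniformNegAssoc_embedding {α β : Type*} [Fintype α] [Fintype β] [DecidableEq β]
    (x : β → ℝ) : UniformNegAssoc fun π : α ↪ β => x ∘ π := by
  rcases isEmpty_or_nonempty (α ↪ β) with _ | ⟨⟨a⟩⟩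
  · exact uniformNegAssoc_of_subsingleton _
  have : MulAction.IsPretransitive (Equiv.Perm β) (α ↪ β) := ⟨Equiv.Perm.exists_smul_eq_embedding⟩
  exact .of_smul (G := Equiv.Perm β) a ((uniformNegAssoc_equiv x).comp_injective a.injective)

lemma div_le_div_mul_div_of_mul_le {N P A B : ℝ} (hN : 0 ≤ N) (h : N * P ≤ A * B) :
    P / N ≤ A / N * (B / N) := by
  rcases hN.eq_or_lt with rfl | hN
  · simp
  rw [div_mul_div_comm, div_le_div_iff₀ hN (by positivity)]
  nlinarith

theorem stmt2_general (m n : ℕ) (x : Fin m → ℝ)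
    (f g : (Fin n → ℝ) → ℝ) (S T : Finset (Fin n)) (hST : Disjoint S T)
    (hfS : DependsOnCoords f S) (hgT : DependsOnCoords g T)
    (hmono : (Monotone f ∧ Monotone g) ∨ (Antitone f ∧ Antitone g)) :
    (∑ π : Fin n ↪ Fin m, f (fun i => x (π i)) * g (fun i => x (π i))) /
        (Fintype.card (Fin n ↪ Fin m) : ℝ) ≤
      ((∑ π : Fin n ↪ Fin m, f (fun i => x (π i))) / (Fintype.card (Fin n ↪ Fin m) : ℝ)) *
        ((∑ π : Fin n ↪ Fin m, g (fun i => x (π i))) / (Fintype.card (Fin n ↪ Fin m) : ℝ)) := by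
  refine div_le_div_mul_div_of_mul_le (Nat.cast_nonneg _) ?_
  have hST' : Disjoint (S : Set (Fin n)) T := Finset.disjoint_coe.2 hST
  rcases hmono with ⟨hf, hg⟩ | ⟨hf, hg⟩
  · exact uniformNegAssoc_embedding x hST' (fun u v => hfS u v) (fun u v => hgT u v) hf hg
  · have hX : UniformNegAssoc fun π : Fin n ↪ Fin m => -(x ∘ π) := uniformNegAssoc_embedding (-x)
    exact hX.card_mul_sum_le_of_antitone hST' (fun u v => hfS u v) (fun u v => hgT u v) hf hg

theorem stmt2 (m n : ℕ) (hnm : n ≤ m) (x : Fin m → ℝ) (hx : ∀ i, 0 ≤ x i)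
    (f g : (Fin n → ℝ) → ℝ) (S T : Finset (Fin n)) (hST : Disjoint S T)
    (hfS : DependsOnCoords f S) (hgT : DependsOnCoords g T)
    (hmono : (Monotone f ∧ Monotone g) ∨ (Antitone f ∧ Antitone g)) :
    (∑ π : Fin n ↪ Fin m, f (fun i => x (π i)) * g (fun i => x (π i))) /
        (Fintype.card (Fin n ↪ Fin m) : ℝ) ≤
      ((∑ π : Fin n ↪ Fin m, f (fun i => x (π i))) / (Fintype.card (Fin n ↪ Fin m) : ℝ)) *
        ((∑ π : Fin n ↪ Fin m, g (fun i => x (π i))) / (Fintype.card (Fin n ↪ Fin m) : ℝ)) :=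
  stmt2_general m n x f g S T hST hfS hgT hmono
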